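/- arXiv:2106.09633 — 3 statements merged into one kernel-verified Lean document; each statement's English description precedes it below -/
import Mathlib

section
/- Let X ⊆ ℝ^s be compact, f : X → ℝ^p continuous, M_0 a p×p positive semidefinite symmetric real matrix, and a ∈ (0,1). For a Borel probability measure ξ on X let M(ξ) = ∫_X f(x) f(x)ᵀ dξ(x) and R(ξ) = a·M(ξ) + (1−a)·M_0. Let ξ* be a Borel probability measure on X with R(ξ*) positive definite. Then the following are equivalent: (i) ξ* maximizes det R(ξ) over all Borel probability measures ξ on X; (ii) for every x ∈ X, f(x)ᵀ R(ξ*)⁻¹ f(x) ≤ trace( M(ξ*) R(ξ*)⁻¹ ). -/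
/-!
The map `ξ ↦ log det R(ξ)` is concave, so first-order conditions characterize its maximum.

Necessity: moving `ξ*` towards the point mass at `x` changes `R` by `t a (f(x) f(x)ᵀ - M(ξ*))`, and
since `det (1 + t C) = 1 + t tr C + O(t²)`, maximality forces `tr (R⁻¹ (f(x) f(x)ᵀ - M(ξ*))) ≤ 0`.

Sufficiency: for `A` positive definite and `B` positive semidefinite,
`det B ≤ det A · exp (tr (A⁻¹ B) - p)` (apply `λ ≤ exp (λ - 1)` to the eigenvalues of
`A^{-1/2} B A^{-1/2}`). Integrating the sensitivity bound against `ξ` gives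
`tr (R(ξ*)⁻¹ R(ξ)) ≤ p`.
-/

open Matrix MeasureTheory

/-- Information matrix `M(ξ) = ∫ f(x) f(x)ᵀ dξ(x)` of a design `ξ` on `X`. -/
noncomputable def infoM {s p : ℕ} {X : Set (Fin s → ℝ)} (f : X → Fin p → ℝ)
    (ξ : Measure X) : Matrix (Fin p) (Fin p) ℝ :=
  Matrix.of fun i j => ∫ x, f x i * f x j ∂ξ

/-- Augmented information matrix `R(ξ) = a M(ξ) + (1 − a) M₀`. -/
noncomputable def augM {s p : ℕ} {X : Set (Fin s → ℝ)} (f : X → Fin p → ℝ)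
    (M0 : Matrix (Fin p) (Fin p) ℝ) (a : ℝ) (ξ : Measure X) :
    Matrix (Fin p) (Fin p) ℝ :=
  a • infoM f ξ + (1 - a) • M0

namespace Matrix

variable {n : Type*} [Fintype n]

theorem trace_mul_vecMulVec (B : Matrix n n ℝ) (u v : n → ℝ) :
    (B * vecMulVec u v).trace = v ⬝ᵥ B *ᵥ u := by
  simp only [trace, diag, mul_apply, vecMulVec_apply, dotProduct, mulVec, Finset.mul_sum]
  exact Finset.sum_congr rfl fun i _ => Finset.sum_congr rfl fun j _ => by ring

variable [DecidableEq n]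

theorem PosSemidef.det_le_exp_trace_sub_card {S : Matrix n n ℝ} (hS : S.PosSemidef) :
    S.det ≤ Real.exp (S.trace - Fintype.card n) := by
  rw [hS.1.det_eq_prod_eigenvalues, hS.1.trace_eq_sum_eigenvalues]
  simp only [RCLike.ofReal_real_eq_id, id]
  calc ∏ i, hS.1.eigenvalues i ≤ ∏ i, Real.exp (hS.1.eigenvalues i - 1) :=
        Finset.prod_le_prod (fun i _ => hS.eigenvalues_nonneg i)
          fun i _ => by linarith [Real.add_one_le_exp (hS.1.eigenvalues i - 1)]
    _ = Real.exp (∑ i, hS.1.eigenvalues i - Fintype.card n) := by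
        rw [← Real.exp_sum, Finset.sum_sub_distrib]; simp

open scoped MatrixOrder in
theorem PosDef.det_le_det_mul_exp {A B : Matrix n n ℝ} (hA : A.PosDef) (hB : B.PosSemidef) :
    B.det ≤ A.det * Real.exp ((A⁻¹ * B).trace - Fintype.card n) := by
  set s := CFC.sqrt A
  have hss : s * s = A := CFC.sqrt_mul_sqrt_self A hA.posSemidef.nonneg
  have hs : s.det ≠ 0 := fun h => hA.det_pos.ne' (by rw [← hss, det_mul, h, zero_mul])
  have hS : (s⁻¹ * B * s⁻¹).PosSemidef := by
    have := hB.conjTranspose_mul_mul_same s⁻¹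
    rwa [(CFC.sqrt_nonneg A).posSemidef.1.inv.eq] at this
  have hdet : B.det = A.det * (s⁻¹ * B * s⁻¹).det := by
    rw [← hss, det_mul, det_mul, det_mul, det_nonsing_inv, Ring.inverse_eq_inv']
    field_simp
  have htr : (s⁻¹ * B * s⁻¹).trace = (A⁻¹ * B).trace := by
    rw [trace_mul_comm, ← mul_assoc, ← mul_inv_rev, hss]
  rw [hdet, ← htr]
  exact mul_le_mul_of_nonneg_left hS.det_le_exp_trace_sub_card hA.det_pos.le

theorem trace_nonpos_of_det_one_add_smul_le_one {C : Matrix n n ℝ}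
    (h : ∀ t ∈ Set.Ioo (0 : ℝ) 1, (1 + t • C).det ≤ 1) : C.trace ≤ 0 := by
  -- `det (1 + t C) = 1 + t tr C + t² q(t)`, so `tr C ≤ -t q(t)`, which tends to `0`.
  set q := (det (1 + (Polynomial.X : Polynomial ℝ) • C.map Polynomial.C)).divX.divX
  have hq : Filter.Tendsto (fun t => C.trace + q.eval t * t) (nhdsWithin 0 (Set.Ioi 0))
      (nhds C.trace) := by
    have := ((q.continuous.mul continuous_id).tendsto 0).const_add C.trace
    simpa using this.mono_left nhdsWithin_le_nhds
  refine le_of_tendsto hq ?_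
  filter_upwards [Ioo_mem_nhdsGT (zero_lt_one' ℝ)] with t ht
  have := h t ht
  rw [det_one_add_smul] at this
  nlinarith [ht.1]

theorem trace_inv_mul_nonpos_of_det_add_smul_le {A D : Matrix n n ℝ} (hA : 0 < A.det)
    (h : ∀ t ∈ Set.Ioo (0 : ℝ) 1, (A + t • D).det ≤ A.det) : (A⁻¹ * D).trace ≤ 0 := by
  refine trace_nonpos_of_det_one_add_smul_le_one fun t ht => ?_
  have hfac : A + t • D = A * (1 + t • (A⁻¹ * D)) := by
    rw [mul_add, mul_one, Matrix.mul_smul, mul_nonsing_inv_cancel_left _ _ hA.ne'.isUnit]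
  have := h t ht
  rw [hfac, det_mul] at this
  exact le_of_mul_le_mul_left (by simpa using this) hA

end Matrix

section Design

variable {s p : ℕ} {X : Set (Fin s → ℝ)} {f : X → Fin p → ℝ}

theorem augM_sub_augM (M0 : Matrix (Fin p) (Fin p) ℝ) (a : ℝ) (ξ ν : Measure X) :
    augM f M0 a ξ - augM f M0 a ν = a • (infoM f ξ - infoM f ν) := by
  rw [augM, augM, smul_sub]; abel

theorem infoM_dirac (x : X) : infoM f (Measure.dirac x) = vecMulVec (f x) (f x) := by
  ext i j
  simp [infoM, vecMulVec_apply]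

variable [CompactSpace X]

theorem trace_infoM_mul (hf : Continuous f) (ξ : Measure X) [IsFiniteMeasure ξ]
    (B : Matrix (Fin p) (Fin p) ℝ) :
    (infoM f ξ * B).trace = ∫ x, f x ⬝ᵥ B *ᵥ f x ∂ξ := by
  have hint : ∀ i j, Integrable (fun x => f x i * f x j * B j i) ξ := fun i j =>
    (by fun_prop : Continuous _).integrable_of_hasCompactSupport (.of_compactSpace _)
  calc (infoM f ξ * B).trace = ∑ i, ∑ j, ∫ x, f x i * f x j * B j i ∂ξ := by
        simp [trace, mul_apply, infoM, integral_mul_const]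
    _ = ∫ x, ∑ i, ∑ j, f x i * f x j * B j i ∂ξ := by
        rw [integral_finsetSum _ fun i _ => integrable_finsetSum _ fun j _ => hint i j]
        exact Finset.sum_congr rfl fun i _ => (integral_finsetSum _ fun j _ => hint i j).symm
    _ = ∫ x, f x ⬝ᵥ B *ᵥ f x ∂ξ := by
        congr 1; ext x
        rw [Finset.sum_comm]
        simp only [dotProduct, mulVec, Finset.mul_sum]
        exact Finset.sum_congr rfl fun j _ => Finset.sum_congr rfl fun i _ => by ring

theorem infoM_posSemidef (hf : Continuous f) (ξ : Measure X) [IsFiniteMeasure ξ] :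
    (infoM f ξ).PosSemidef := by
  refine posSemidef_iff_dotProduct_mulVec.mpr ⟨?_, fun v => ?_⟩
  · ext i j
    simp only [infoM, conjTranspose_apply, of_apply, star_trivial, mul_comm]
  · have hsq : ∀ x, f x ⬝ᵥ vecMulVec v v *ᵥ f x = (f x ⬝ᵥ v) ^ 2 := fun x => by
      rw [vecMulVec_mulVec, op_smul_eq_smul, dotProduct_smul, smul_eq_mul, dotProduct_comm, sq]
    rw [star_trivial, ← trace_mul_vecMulVec, trace_infoM_mul hf]
    exact integral_nonneg fun x => (hsq x).symm ▸ sq_nonneg _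

open scoped NNReal in
theorem infoM_add_smul (hf : Continuous f) (ξ ν : Measure X) [IsFiniteMeasure ξ]
    [IsFiniteMeasure ν] (c d : ℝ≥0) :
    infoM f (c • ξ + d • ν) = (c : ℝ) • infoM f ξ + (d : ℝ) • infoM f ν := by
  ext i j
  have hint : Continuous fun x => f x i * f x j := by fun_prop
  simp only [infoM, Matrix.add_apply, Matrix.smul_apply, of_apply]
  rw [integral_add_measure
    (hint.integrable_of_hasCompactSupport (.of_compactSpace _)).smul_measure_nnreal
    (hint.integrable_of_hasCompactSupport (.of_compactSpace _)).smul_measure_nnreal,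
    integral_smul_nnreal_measure, integral_smul_nnreal_measure, NNReal.smul_def, NNReal.smul_def]

open unitInterval in
theorem augM_mix_dirac (hf : Continuous f) (M0 : Matrix (Fin p) (Fin p) ℝ) (a : ℝ)
    (ξ : Measure X) [IsFiniteMeasure ξ] (x : X) (t : I) :
    augM f M0 a (toNNReal t • Measure.dirac x + toNNReal (σ t) • ξ) =
      augM f M0 a ξ + (t : ℝ) • a • (vecMulVec (f x) (f x) - infoM f ξ) := by
  rw [augM, augM, infoM_add_smul hf, infoM_dirac, coe_toNNReal, coe_toNNReal, coe_symm_eq]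
  module

theorem sensitivity_le_of_forall_det_augM_le (hf : Continuous f) {M0 : Matrix (Fin p) (Fin p) ℝ}
    {a : ℝ} (ha : 0 < a) {ξs : Measure X} [IsProbabilityMeasure ξs]
    (hR : 0 < (augM f M0 a ξs).det)
    (hopt : ∀ ξ : Measure X, IsProbabilityMeasure ξ → (augM f M0 a ξ).det ≤ (augM f M0 a ξs).det)
    (x : X) : f x ⬝ᵥ (augM f M0 a ξs)⁻¹ *ᵥ f x ≤ (infoM f ξs * (augM f M0 a ξs)⁻¹).trace := by
  have hdir : ((augM f M0 a ξs)⁻¹ * a • (vecMulVec (f x) (f x) - infoM f ξs)).trace ≤ 0 := by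
    refine trace_inv_mul_nonpos_of_det_add_smul_le hR fun t ht => ?_
    rw [← augM_mix_dirac hf M0 a ξs x ⟨t, Set.Ioo_subset_Icc_self ht⟩]
    exact hopt _ inferInstance
  rw [Matrix.mul_smul, trace_smul, mul_sub, trace_sub, trace_mul_vecMulVec, trace_mul_comm,
    smul_eq_mul] at hdir
  exact sub_nonpos.1 (nonpos_of_mul_nonpos_right hdir ha)

theorem det_augM_le_of_sensitivity_le (hf : Continuous f) {M0 : Matrix (Fin p) (Fin p) ℝ}
    (hM0 : M0.PosSemidef) {a : ℝ} (ha0 : 0 ≤ a) (ha1 : a ≤ 1) {ξs : Measure X}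
    (hR : (augM f M0 a ξs).PosDef)
    (hsens : ∀ x, f x ⬝ᵥ (augM f M0 a ξs)⁻¹ *ᵥ f x ≤ (infoM f ξs * (augM f M0 a ξs)⁻¹).trace)
    (ξ : Measure X) [IsProbabilityMeasure ξ] : (augM f M0 a ξ).det ≤ (augM f M0 a ξs).det := by
  set R := augM f M0 a ξs
  have hpsd : (augM f M0 a ξ).PosSemidef :=
    ((infoM_posSemidef hf ξ).smul ha0).add (hM0.smul (sub_nonneg.2 ha1))
  have hmean : (infoM f ξ * R⁻¹).trace ≤ (infoM f ξs * R⁻¹).trace := by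
    rw [trace_infoM_mul hf ξ]
    calc ∫ x, f x ⬝ᵥ R⁻¹ *ᵥ f x ∂ξ ≤ ∫ _, (infoM f ξs * R⁻¹).trace ∂ξ :=
          integral_mono ((by fun_prop : Continuous _).integrable_of_hasCompactSupport
            (.of_compactSpace _)) (integrable_const _) hsens
      _ = (infoM f ξs * R⁻¹).trace := by simp
  have htr : (R⁻¹ * augM f M0 a ξ).trace - Fintype.card (Fin p) ≤ 0 := by
    have : (R⁻¹ * augM f M0 a ξ).trace - Fintype.card (Fin p) =
        a * ((infoM f ξ * R⁻¹).trace - (infoM f ξs * R⁻¹).trace) := by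
      rw [← sub_add_cancel (augM f M0 a ξ) R, mul_add, nonsing_inv_mul _ hR.det_pos.ne'.isUnit,
        trace_add, trace_one, augM_sub_augM, Matrix.mul_smul, trace_smul, mul_sub, trace_sub,
        trace_mul_comm R⁻¹, trace_mul_comm R⁻¹, smul_eq_mul, add_sub_cancel_right]
    rw [this]
    exact mul_nonpos_of_nonneg_of_nonpos ha0 (sub_nonpos.2 hmean)
  calc (augM f M0 a ξ).det
      ≤ R.det * Real.exp ((R⁻¹ * augM f M0 a ξ).trace - Fintype.card (Fin p)) :=
        hR.det_le_det_mul_exp hpsd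
    _ ≤ R.det := mul_le_of_le_one_right hR.det_pos.le (Real.exp_le_one_iff.2 htr)

end Design

/-- D-criterion case of the general equivalence theorem for augmented designs:
`ξ*` maximizes `det R(ξ)` over all designs iff the sensitivity condition
`f(x)ᵀ R(ξ*)⁻¹ f(x) ≤ trace(M(ξ*) R(ξ*)⁻¹)` holds for all `x ∈ X`. -/
theorem stmt5 {s p : ℕ} (X : Set (Fin s → ℝ)) (hX : IsCompact X)
    (f : X → Fin p → ℝ) (hf : Continuous f)
    (M0 : Matrix (Fin p) (Fin p) ℝ) (hM0 : M0.PosSemidef)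
    (a : ℝ) (ha : a ∈ Set.Ioo (0 : ℝ) 1)
    (ξs : Measure X) [IsProbabilityMeasure ξs]
    (hR : (augM f M0 a ξs).PosDef) :
    (∀ ξ : Measure X, IsProbabilityMeasure ξ →
        (augM f M0 a ξ).det ≤ (augM f M0 a ξs).det) ↔
      ∀ x : X, f x ⬝ᵥ (augM f M0 a ξs)⁻¹ *ᵥ f x ≤
        Matrix.trace (infoM f ξs * (augM f M0 a ξs)⁻¹) := by
  have : CompactSpace X := isCompact_iff_compactSpace.mp hX
  exact ⟨fun hopt => sensitivity_le_of_forall_det_augM_le hf ha.1 hR.det_pos hopt,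
    fun hsens ξ _ => det_augM_le_of_sensitivity_le hf hM0 ha.1.le ha.2.le hR hsens ξ⟩
end

section
/- Fix θ_1 > 0, θ_2 > 0 and x_max > 0, and define f : [0, x_max] → ℝ² by f(x) = ( x/(θ_2 + x), −θ_1 x/(θ_2 + x)² )ᵀ. Let x* = x_max / ( x_max/θ_2 + 2 ) (equivalently x* = θ_2 x_max/(x_max + 2θ_2)) and let ξ_D be the probability measure placing mass 1/2 at x* and mass 1/2 at x_max. Then for every Borel probability measure ξ on [0, x_max], det ( ∫ f(x) f(x)ᵀ dξ(x) ) ≤ det ( ∫ f(x) f(x)ᵀ dξ_D(x) ); that is, ξ_D is the locally D-optimal design for the Michaelis–Menten model. -/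
open Matrix MeasureTheory ENNReal

/-- Gradient of the Michaelis–Menten mean function `η_x(θ) = θ₁ x/(θ₂ + x)` with
respect to `θ = (θ₁, θ₂)`. -/
noncomputable def mmGrad (θ1 θ2 : ℝ) (x : ℝ) : Fin 2 → ℝ :=
  ![x / (θ2 + x), -θ1 * x / (θ2 + x) ^ 2]

/-- Information matrix `M(ξ) = ∫ f(x) f(x)ᵀ dξ(x)` of a design `ξ` on `[0, xmax]`
for the Michaelis–Menten model. -/
noncomputable def mmInfo (θ1 θ2 : ℝ) (ξ : Measure ℝ) : Matrix (Fin 2) (Fin 2) ℝ :=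
  Matrix.of fun i j => ∫ x, mmGrad θ1 θ2 x i * mmGrad θ1 θ2 x j ∂ξ

lemma mm_integrable_dirac (f : ℝ → ℝ) (a : ℝ) : Integrable f (Measure.dirac a) := by
  refine (integrable_const (f a)).congr ?_
  rw [Filter.EventuallyEq, MeasureTheory.ae_dirac_eq]
  simp

lemma mm_two_point_integral (f : ℝ → ℝ) (a b : ℝ) :
    ∫ x, f x ∂((2⁻¹ : ℝ≥0∞) • Measure.dirac a + (2⁻¹ : ℝ≥0∞) • Measure.dirac b)
      = f a / 2 + f b / 2 := by
  rw [integral_add_measure ((mm_integrable_dirac f a).smul_measure (by simp))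
      ((mm_integrable_dirac f b).smul_measure (by simp)),
    integral_smul_measure, integral_smul_measure, integral_dirac, integral_dirac]
  simp [ENNReal.toReal_inv]
  ring

lemma mm_key_scalar (p q r A B C : ℝ) (hp : 0 < p) (hr : 0 < r)
    (hD : 0 < p * r - q ^ 2)
    (hS0 : 0 ≤ r * A - 2 * q * B + p * C)
    (hS2 : r * A - 2 * q * B + p * C ≤ 2 * (p * r - q ^ 2)) :
    A * C - B ^ 2 ≤ p * r - q ^ 2 := by
  set S := r * A - 2 * q * B + p * C with hS
  set D := p * r - q ^ 2 with hDdef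
  have hpr : 0 < p * r := mul_pos hp hr
  have hid : p * r * (S ^ 2 - 4 * D * (A * C - B ^ 2)) =
      (2 * (p * r) * B - q * (r * A + p * C)) ^ 2 + D * (r * A - p * C) ^ 2 := by
    simp only [hS, hDdef]; ring
  have hrhs : 0 ≤ (2 * (p * r) * B - q * (r * A + p * C)) ^ 2 + D * (r * A - p * C) ^ 2 := by
    positivity
  have h1 : 4 * D * (A * C - B ^ 2) ≤ S ^ 2 := by nlinarith
  have h2 : S ^ 2 ≤ 4 * D ^ 2 := by nlinarith
  nlinarith

lemma mm_pointwise_poly (a c0 : ℝ) (h0 : 0 ≤ a) (h1 : a ≤ c0) :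
    a ^ 2 * (20 * a ^ 2 - 36 * c0 * a + 17 * c0 ^ 2) ≤ c0 ^ 4 := by
  nlinarith [mul_nonneg (mul_nonneg (sub_nonneg.2 h1) (sq_nonneg (2 * a - c0)))
    (by linarith : (0:ℝ) ≤ 5 * a + c0)]

lemma mm_quad_nonneg (a c0 : ℝ) : 0 ≤ 20 * a ^ 2 - 36 * c0 * a + 17 * c0 ^ 2 := by
  nlinarith [sq_nonneg (20 * a - 18 * c0), sq_nonneg c0]


lemma mm_bounds (θ1 θ2 xmax x : ℝ) (hθ1 : 0 < θ1) (hθ2 : 0 < θ2)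
    (hx0 : 0 ≤ x) (hxmax : x ≤ xmax) :
    0 ≤ x / (θ2 + x) ∧ x / (θ2 + x) ≤ xmax / (θ2 + xmax) ∧
      |-θ1 * x / (θ2 + x) ^ 2| ≤ θ1 / θ2 := by
  have hd : (0:ℝ) < θ2 + x := by linarith
  have hθ2m : (0:ℝ) < θ2 + xmax := by linarith
  have hb : θ1 * x / (θ2 + x) ^ 2 ≤ θ1 / θ2 := by
    rw [div_le_div_iff₀ (by positivity) hθ2]
    nlinarith [mul_nonneg hθ1.le (mul_nonneg hx0 hx0),
      mul_nonneg hθ1.le (mul_nonneg hθ2.le hx0),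
      mul_nonneg hθ1.le (mul_nonneg hθ2.le hθ2.le)]
  have hbnn : 0 ≤ θ1 * x / (θ2 + x) ^ 2 := by positivity
  have hneg : -θ1 * x / (θ2 + x) ^ 2 = -(θ1 * x / (θ2 + x) ^ 2) := by ring
  have hκnn : 0 ≤ θ1 / θ2 := by positivity
  refine ⟨by positivity, ?_, ?_⟩
  · rw [div_le_div_iff₀ hd hθ2m]
    nlinarith [mul_le_mul_of_nonneg_right hxmax hθ2.le]
  · rw [abs_le, hneg]
    exact ⟨by linarith, by linarith⟩

lemma mm_R0_pos (κ c0 : ℝ) (hκ : 0 < κ) (hc0 : 0 < c0) :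
    0 < κ ^ 2 * c0 ^ 2 * (17 * c0 ^ 2 - 36 * c0 + 20) / 32 := by
  have h : 0 < 17 * c0 ^ 2 - 36 * c0 + 20 := by nlinarith [sq_nonneg (17 * c0 - 18)]
  positivity

/-- The two-point equal-weight design on `x* = xmax/(xmax/θ₂ + 2)` and `xmax` is the
locally D-optimal design for the Michaelis–Menten model: it maximizes `det M(ξ)` over
all Borel probability measures concentrated on `[0, xmax]`. -/
theorem stmt14 (θ1 θ2 xmax : ℝ) (hθ1 : 0 < θ1) (hθ2 : 0 < θ2) (hx : 0 < xmax) :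
    ∀ ξ : Measure ℝ, IsProbabilityMeasure ξ → ξ (Set.Icc 0 xmax)ᶜ = 0 →
      (mmInfo θ1 θ2 ξ).det ≤
        (mmInfo θ1 θ2
          ((2⁻¹ : ℝ≥0∞) • Measure.dirac (xmax / (xmax / θ2 + 2)) +
            (2⁻¹ : ℝ≥0∞) • Measure.dirac xmax)).det := by
  intro ξ hprob hcomp
  set s : ℝ := xmax / (xmax / θ2 + 2) with hsdef
  set ξD : Measure ℝ :=
    (2⁻¹ : ℝ≥0∞) • Measure.dirac s + (2⁻¹ : ℝ≥0∞) • Measure.dirac xmax with hξD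
  set c0 : ℝ := xmax / (θ2 + xmax) with hc0def
  set κ : ℝ := θ1 / θ2 with hκdef
  have hθ2m : (0:ℝ) < θ2 + xmax := by linarith
  have hs_pos : 0 < s := by rw [hsdef]; positivity
  have hθ2s : (0:ℝ) < θ2 + s := by linarith
  have hc0 : 0 < c0 := by rw [hc0def]; positivity
  have hκ : 0 < κ := by rw [hκdef]; positivity
  -- basic function facts
  have hF1s : s / (θ2 + s) = c0 / 2 := by
    rw [hsdef, hc0def]
    have hd : xmax / θ2 + 2 ≠ 0 := by positivity
    have h2 : θ2 + xmax / (xmax / θ2 + 2) ≠ 0 := by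
      have := hθ2s; rw [hsdef] at this; linarith
    field_simp
    ring
  have hF2rel : ∀ x : ℝ, θ2 + x ≠ 0 →
      -θ1 * x / (θ2 + x) ^ 2 = -κ * (x / (θ2 + x)) * (1 - x / (θ2 + x)) := by
    intro x hx0
    rw [hκdef]
    field_simp
    ring
  -- entries of the optimal information matrix
  set P0 : ℝ := 5 / 8 * c0 ^ 2 with hP0def
  set Q0 : ℝ := -(κ * c0 ^ 2 * (10 - 9 * c0)) / 16 with hQ0def
  set R0 : ℝ := κ ^ 2 * c0 ^ 2 * (17 * c0 ^ 2 - 36 * c0 + 20) / 32 with hR0def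
  set D0 : ℝ := κ ^ 2 * c0 ^ 6 / 64 with hD0def
  have hF1m : xmax / (θ2 + xmax) = c0 := by rw [hc0def]
  have hF2s : -θ1 * s / (θ2 + s) ^ 2 = -κ * (c0 / 2) * (1 - c0 / 2) := by
    rw [hF2rel s hθ2s.ne', hF1s]
  have hF2m : -θ1 * xmax / (θ2 + xmax) ^ 2 = -κ * c0 * (1 - c0) := by
    rw [hF2rel xmax hθ2m.ne', hF1m]
  have e00 : mmInfo θ1 θ2 ξD 0 0 = P0 := by
    have h := mm_two_point_integral (fun x => (x / (θ2 + x)) * (x / (θ2 + x))) s xmax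
    have : mmInfo θ1 θ2 ξD 0 0
        = (s / (θ2 + s)) * (s / (θ2 + s)) / 2
          + (xmax / (θ2 + xmax)) * (xmax / (θ2 + xmax)) / 2 := h
    rw [this, hF1s, hF1m, hP0def]; ring
  have e01 : mmInfo θ1 θ2 ξD 0 1 = Q0 := by
    have h := mm_two_point_integral
      (fun x => (x / (θ2 + x)) * (-θ1 * x / (θ2 + x) ^ 2)) s xmax
    have : mmInfo θ1 θ2 ξD 0 1
        = (s / (θ2 + s)) * (-θ1 * s / (θ2 + s) ^ 2) / 2
          + (xmax / (θ2 + xmax)) * (-θ1 * xmax / (θ2 + xmax) ^ 2) / 2 := h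
    rw [this, hF1s, hF1m, hF2s, hF2m, hQ0def]; ring
  have e10 : mmInfo θ1 θ2 ξD 1 0 = Q0 := by
    have h := mm_two_point_integral
      (fun x => (-θ1 * x / (θ2 + x) ^ 2) * (x / (θ2 + x))) s xmax
    have : mmInfo θ1 θ2 ξD 1 0
        = (-θ1 * s / (θ2 + s) ^ 2) * (s / (θ2 + s)) / 2
          + (-θ1 * xmax / (θ2 + xmax) ^ 2) * (xmax / (θ2 + xmax)) / 2 := h
    rw [this, hF1s, hF1m, hF2s, hF2m, hQ0def]; ring
  have e11 : mmInfo θ1 θ2 ξD 1 1 = R0 := by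
    have h := mm_two_point_integral
      (fun x => (-θ1 * x / (θ2 + x) ^ 2) * (-θ1 * x / (θ2 + x) ^ 2)) s xmax
    have : mmInfo θ1 θ2 ξD 1 1
        = (-θ1 * s / (θ2 + s) ^ 2) * (-θ1 * s / (θ2 + s) ^ 2) / 2
          + (-θ1 * xmax / (θ2 + xmax) ^ 2) * (-θ1 * xmax / (θ2 + xmax) ^ 2) / 2 := h
    rw [this, hF2s, hF2m, hR0def]; ring
  have hdetD : (mmInfo θ1 θ2 ξD).det = P0 * R0 - Q0 ^ 2 := by
    rw [Matrix.det_fin_two, e00, e01, e10, e11]; ring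
  have hD0eq : P0 * R0 - Q0 ^ 2 = D0 := by
    rw [hP0def, hQ0def, hR0def, hD0def]; ring
  -- measurability and a.e. facts for ξ
  have haemem : ∀ᵐ x ∂ξ, x ∈ Set.Icc 0 xmax := mem_ae_iff.mpr hcomp
  have hmeas1 : Measurable (fun x : ℝ => x / (θ2 + x)) := by fun_prop
  have hmeas2 : Measurable (fun x : ℝ => -θ1 * x / (θ2 + x) ^ 2) := by fun_prop
  have hbound : ∀ x ∈ Set.Icc (0:ℝ) xmax,
      0 ≤ x / (θ2 + x) ∧ x / (θ2 + x) ≤ c0 ∧ |-θ1 * x / (θ2 + x) ^ 2| ≤ κ := by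
    intro x hxm
    rw [hc0def, hκdef]
    exact mm_bounds θ1 θ2 xmax x hθ1 hθ2 hxm.1 hxm.2
  have hbc0 : ∀ x ∈ Set.Icc (0:ℝ) xmax, |x / (θ2 + x)| ≤ max c0 1 := by
    intro x hxm
    obtain ⟨h0, h1, _⟩ := hbound x hxm
    rw [abs_of_nonneg h0]
    exact le_max_of_le_left h1
  -- integrability of the entry integrands
  have hint11 : Integrable (fun x => (x / (θ2 + x)) * (x / (θ2 + x))) ξ := by
    refine (integrable_const ((max c0 1) * (max c0 1))).mono'
      (hmeas1.mul hmeas1).aestronglyMeasurable ?_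
    filter_upwards [haemem] with x hxm
    have h := hbc0 x hxm
    have hm : (0:ℝ) ≤ max c0 1 := le_max_of_le_right zero_le_one
    calc ‖(x / (θ2 + x)) * (x / (θ2 + x))‖ = |x / (θ2 + x)| * |x / (θ2 + x)| := by
          rw [Real.norm_eq_abs, abs_mul]
      _ ≤ max c0 1 * max c0 1 := by
          exact mul_le_mul h h (abs_nonneg _) hm
  have hint12 : Integrable (fun x => (x / (θ2 + x)) * (-θ1 * x / (θ2 + x) ^ 2)) ξ := by
    refine (integrable_const ((max c0 1) * κ)).mono'
      (hmeas1.mul hmeas2).aestronglyMeasurable ?_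
    filter_upwards [haemem] with x hxm
    obtain ⟨h0, h1, h2⟩ := hbound x hxm
    have hm : (0:ℝ) ≤ max c0 1 := le_max_of_le_right zero_le_one
    calc ‖(x / (θ2 + x)) * (-θ1 * x / (θ2 + x) ^ 2)‖
        = |x / (θ2 + x)| * |-θ1 * x / (θ2 + x) ^ 2| := by rw [Real.norm_eq_abs, abs_mul]
      _ ≤ max c0 1 * κ := mul_le_mul (hbc0 x hxm) h2 (abs_nonneg _) hm
  have hint22 : Integrable (fun x => (-θ1 * x / (θ2 + x) ^ 2) * (-θ1 * x / (θ2 + x) ^ 2)) ξ := by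
    refine (integrable_const (κ * κ)).mono'
      (hmeas2.mul hmeas2).aestronglyMeasurable ?_
    filter_upwards [haemem] with x hxm
    obtain ⟨h0, h1, h2⟩ := hbound x hxm
    calc ‖(-θ1 * x / (θ2 + x) ^ 2) * (-θ1 * x / (θ2 + x) ^ 2)‖
        = |-θ1 * x / (θ2 + x) ^ 2| * |-θ1 * x / (θ2 + x) ^ 2| := by
          rw [Real.norm_eq_abs, abs_mul]
      _ ≤ κ * κ := mul_le_mul h2 h2 (abs_nonneg _) hκ.le
  -- the moments
  set A : ℝ := ∫ x, (x / (θ2 + x)) * (x / (θ2 + x)) ∂ξ with hA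
  set B : ℝ := ∫ x, (x / (θ2 + x)) * (-θ1 * x / (θ2 + x) ^ 2) ∂ξ with hB
  set C : ℝ := ∫ x, (-θ1 * x / (θ2 + x) ^ 2) * (-θ1 * x / (θ2 + x) ^ 2) ∂ξ with hC
  have hdetξ : (mmInfo θ1 θ2 ξ).det = A * C - B ^ 2 := by
    have e10' : mmInfo θ1 θ2 ξ 1 0 = B := by
      show (∫ x, (-θ1 * x / (θ2 + x) ^ 2) * (x / (θ2 + x)) ∂ξ) = B
      rw [hB]
      congr 1
      funext x
      ring
    have e01' : mmInfo θ1 θ2 ξ 0 1 = B := rfl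
    have e00' : mmInfo θ1 θ2 ξ 0 0 = A := rfl
    have e11' : mmInfo θ1 θ2 ξ 1 1 = C := rfl
    rw [Matrix.det_fin_two, e00', e01', e10', e11']
    ring
  -- the sensitivity function
  have h1 : Integrable (fun x => R0 * ((x / (θ2 + x)) * (x / (θ2 + x)))) ξ :=
    hint11.const_mul R0
  have h2 : Integrable (fun x => (2 * Q0) * ((x / (θ2 + x)) * (-θ1 * x / (θ2 + x) ^ 2))) ξ :=
    hint12.const_mul (2 * Q0)
  have h3 : Integrable (fun x => P0 * ((-θ1 * x / (θ2 + x) ^ 2) * (-θ1 * x / (θ2 + x) ^ 2))) ξ :=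
    hint22.const_mul P0
  have hφeq : (∫ x, (R0 * ((x / (θ2 + x)) * (x / (θ2 + x)))
        - (2 * Q0) * ((x / (θ2 + x)) * (-θ1 * x / (θ2 + x) ^ 2)))
        + P0 * ((-θ1 * x / (θ2 + x) ^ 2) * (-θ1 * x / (θ2 + x) ^ 2)) ∂ξ)
      = R0 * A - 2 * Q0 * B + P0 * C := by
    have i1 : (∫ x, (R0 * ((x / (θ2 + x)) * (x / (θ2 + x)))
          - (2 * Q0) * ((x / (θ2 + x)) * (-θ1 * x / (θ2 + x) ^ 2)))
          + P0 * ((-θ1 * x / (θ2 + x) ^ 2) * (-θ1 * x / (θ2 + x) ^ 2)) ∂ξ)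
        = (∫ x, R0 * ((x / (θ2 + x)) * (x / (θ2 + x)))
            - (2 * Q0) * ((x / (θ2 + x)) * (-θ1 * x / (θ2 + x) ^ 2)) ∂ξ)
          + ∫ x, P0 * ((-θ1 * x / (θ2 + x) ^ 2) * (-θ1 * x / (θ2 + x) ^ 2)) ∂ξ :=
      integral_add (h1.sub h2) h3
    have i2 : (∫ x, R0 * ((x / (θ2 + x)) * (x / (θ2 + x)))
          - (2 * Q0) * ((x / (θ2 + x)) * (-θ1 * x / (θ2 + x) ^ 2)) ∂ξ)
        = (∫ x, R0 * ((x / (θ2 + x)) * (x / (θ2 + x))) ∂ξ)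
          - ∫ x, (2 * Q0) * ((x / (θ2 + x)) * (-θ1 * x / (θ2 + x) ^ 2)) ∂ξ :=
      integral_sub h1 h2
    rw [i1, i2, integral_const_mul, integral_const_mul, integral_const_mul,
      ← hA, ← hB, ← hC]
  -- pointwise bounds
  have hφbounds : ∀ x ∈ Set.Icc (0:ℝ) xmax,
      0 ≤ (R0 * ((x / (θ2 + x)) * (x / (θ2 + x)))
        - (2 * Q0) * ((x / (θ2 + x)) * (-θ1 * x / (θ2 + x) ^ 2)))
        + P0 * ((-θ1 * x / (θ2 + x) ^ 2) * (-θ1 * x / (θ2 + x) ^ 2)) ∧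
      (R0 * ((x / (θ2 + x)) * (x / (θ2 + x)))
        - (2 * Q0) * ((x / (θ2 + x)) * (-θ1 * x / (θ2 + x) ^ 2)))
        + P0 * ((-θ1 * x / (θ2 + x) ^ 2) * (-θ1 * x / (θ2 + x) ^ 2)) ≤ 2 * D0 := by
    intro x hxm
    obtain ⟨ha0, hac, _⟩ := hbound x hxm
    have hd : (0:ℝ) < θ2 + x := by linarith [hxm.1]
    have hF2x : -θ1 * x / (θ2 + x) ^ 2
        = -κ * (x / (θ2 + x)) * (1 - x / (θ2 + x)) := hF2rel x hd.ne'
    set a : ℝ := x / (θ2 + x) with hadef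
    have hφx : (R0 * (a * a) - (2 * Q0) * (a * (-θ1 * x / (θ2 + x) ^ 2)))
          + P0 * ((-θ1 * x / (θ2 + x) ^ 2) * (-θ1 * x / (θ2 + x) ^ 2))
        = κ ^ 2 * c0 ^ 2 / 32 * (a ^ 2 * (20 * a ^ 2 - 36 * c0 * a + 17 * c0 ^ 2)) := by
      rw [hF2x, hP0def, hQ0def, hR0def]
      ring
    rw [hφx]
    constructor
    · have hq := mm_quad_nonneg a c0
      positivity
    · rw [hD0def]
      have hkey := mm_pointwise_poly a c0 ha0 hac
      have hcoef : (0:ℝ) ≤ κ ^ 2 * c0 ^ 2 / 32 := by positivity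
      calc κ ^ 2 * c0 ^ 2 / 32 * (a ^ 2 * (20 * a ^ 2 - 36 * c0 * a + 17 * c0 ^ 2))
          ≤ κ ^ 2 * c0 ^ 2 / 32 * c0 ^ 4 := mul_le_mul_of_nonneg_left hkey hcoef
        _ = 2 * (κ ^ 2 * c0 ^ 6 / 64) := by ring
  have hS0 : 0 ≤ R0 * A - 2 * Q0 * B + P0 * C := by
    rw [← hφeq]
    apply integral_nonneg_of_ae
    filter_upwards [haemem] with x hxm
    exact (hφbounds x hxm).1
  have hS2 : R0 * A - 2 * Q0 * B + P0 * C ≤ 2 * (P0 * R0 - Q0 ^ 2) := by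
    rw [← hφeq, hD0eq]
    calc (∫ x, (R0 * ((x / (θ2 + x)) * (x / (θ2 + x)))
          - (2 * Q0) * ((x / (θ2 + x)) * (-θ1 * x / (θ2 + x) ^ 2)))
          + P0 * ((-θ1 * x / (θ2 + x) ^ 2) * (-θ1 * x / (θ2 + x) ^ 2)) ∂ξ)
        ≤ ∫ _, 2 * D0 ∂ξ := by
          apply integral_mono_ae ((h1.sub h2).add h3) (integrable_const _)
          filter_upwards [haemem] with x hxm
          exact (hφbounds x hxm).2
      _ = 2 * D0 := by simp
  -- finish
  have hD0pos : 0 < P0 * R0 - Q0 ^ 2 := by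
    rw [hD0eq, hD0def]; positivity
  have hP0pos : 0 < P0 := by rw [hP0def]; positivity
  have hR0pos : 0 < R0 := by
    rw [hR0def]; exact mm_R0_pos κ c0 hκ hc0
  rw [hdetξ, hdetD]
  exact mm_key_scalar P0 Q0 R0 A B C hP0pos hR0pos hD0pos hS0 hS2
end

section
/- Fix θ_1 > 0, θ_2 > 0 and x_max > 0, define f : [0, x_max] → ℝ² by f(x) = ( x/(θ_2 + x), −θ_1 x/(θ_2 + x)² )ᵀ, and let c = (0,1)ᵀ. Let b = x_max/θ_2, let x_c = θ_2 b (√2 − 1) / ( 1 + b √2 (√2 − 1) ), and let ξ_c be the probability measure placing mass 1/√2 at x_c and mass 1 − 1/√2 at x_max. Then M(ξ_c) = ∫ f f ᵀ dξ_c is invertible, and for every Borel probability measure ξ on [0, x_max] with M(ξ) = ∫ f fᵀ dξ invertible, cᵀ M(ξ_c)⁻¹ c ≤ cᵀ M(ξ)⁻¹ c; that is, ξ_c is the locally c-optimal design for estimating the Michaelis–Menten constant θ_2. -/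
open Matrix MeasureTheory ENNReal

/-!
In the coordinate `τ = x/(θ₂+x)` the gradient is `f = (τ, -(θ₁/θ₂) τ(1-τ))`, and the design
space becomes `τ ∈ [0, s]` with `s = xmax/(θ₂+xmax)`. Put `t = (√2-1) s` and choose `d` with
`dᵀf = u² - 2u`, `u = τ/t`. Since `0 ≤ u ≤ 1+√2`, `(dᵀf)² ≤ 1` on the design space, so
`dᵀM(ξ)d ≤ 1` for every design `ξ`, and Cauchy–Schwarz for the form `M(ξ)` gives
`(dᵀc)² ≤ dᵀM(ξ)d · cᵀM(ξ)⁻¹c ≤ cᵀM(ξ)⁻¹c`.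
The support points `x_c`, `xmax` of `ξ_c` sit at `u = 1` and `u = 1+√2`, where `dᵀf = ∓1`, and
the weights `1/√2`, `1-1/√2` make `M(ξ_c)d` a multiple of `c`; hence the bound is attained.
-/

namespace Matrix

variable {n : Type*} [Fintype n]

theorem PosSemidef.dotProduct_mulVec_sq_le {M : Matrix n n ℝ} (hM : M.PosSemidef) (x y : n → ℝ) :
    (x ⬝ᵥ M *ᵥ y) ^ 2 ≤ (x ⬝ᵥ M *ᵥ x) * (y ⬝ᵥ M *ᵥ y) := by
  have hsymm : y ⬝ᵥ M *ᵥ x = x ⬝ᵥ M *ᵥ y := by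
    have hT : Mᵀ = M := by simpa [conjTranspose_eq_transpose_of_trivial] using hM.isHermitian.eq
    rw [dotProduct_mulVec, ← mulVec_transpose, hT, dotProduct_comm]
  have hquad : ∀ r : ℝ,
      0 ≤ (y ⬝ᵥ M *ᵥ y) * (r * r) + 2 * (x ⬝ᵥ M *ᵥ y) * r + x ⬝ᵥ M *ᵥ x := by
    intro r
    have h := hM.dotProduct_mulVec_nonneg (x + r • y)
    simp only [star_trivial, mulVec_add, mulVec_smul, add_dotProduct, dotProduct_add,
      smul_dotProduct, dotProduct_smul, smul_eq_mul, hsymm] at h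
    linarith
  have h := discrim_le_zero hquad
  rw [discrim] at h
  nlinarith

theorem PosSemidef.sq_dotProduct_le [DecidableEq n] {M : Matrix n n ℝ} (hM : M.PosSemidef)
    (hdet : IsUnit M.det) (c d : n → ℝ) :
    (d ⬝ᵥ c) ^ 2 ≤ (d ⬝ᵥ M *ᵥ d) * (c ⬝ᵥ M⁻¹ *ᵥ c) := by
  have hc : M *ᵥ (M⁻¹ *ᵥ c) = c := by rw [mulVec_mulVec, mul_nonsing_inv M hdet, one_mulVec]
  have h := hM.dotProduct_mulVec_sq_le d (M⁻¹ *ᵥ c)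
  rwa [hc, dotProduct_comm (M⁻¹ *ᵥ c)] at h

theorem dotProduct_inv_mulVec_eq_of_mulVec_eq [DecidableEq n] {M : Matrix n n ℝ}
    (hM : IsUnit M.det) {c y : n → ℝ} (hy : M *ᵥ y = c) : c ⬝ᵥ M⁻¹ *ᵥ c = c ⬝ᵥ y := by
  rw [← hy, mulVec_mulVec, nonsing_inv_mul M hM, one_mulVec]

theorem smul_vecMulVec_add_smul_vecMulVec_mulVec (a b : ℝ) (u v w : n → ℝ) :
    (a • vecMulVec u u + b • vecMulVec v v) *ᵥ w = (a * (u ⬝ᵥ w)) • u + (b * (v ⬝ᵥ w)) • v := by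
  rw [add_mulVec, smul_mulVec, smul_mulVec, vecMulVec_mulVec, vecMulVec_mulVec, op_smul_eq_smul,
    op_smul_eq_smul, smul_smul, smul_smul]

theorem det_smul_vecMulVec_add_smul_vecMulVec (a b : ℝ) (u v : Fin 2 → ℝ) :
    (a • vecMulVec u u + b • vecMulVec v v).det = a * b * (u 0 * v 1 - u 1 * v 0) ^ 2 := by
  simp only [vecMulVec, smul_of, of_add_of, det_fin_two, of_apply, Pi.add_apply, Pi.smul_apply,
    smul_eq_mul]
  ring

theorem sq_dotProduct_eq_sum_sum (v w : n → ℝ) :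
    (v ⬝ᵥ w) ^ 2 = ∑ i, ∑ j, v i * v j * (w i * w j) := by
  simp only [dotProduct, sq, Finset.sum_mul_sum]
  exact Finset.sum_congr rfl fun i _ => Finset.sum_congr rfl fun j _ => by ring

end Matrix

section InfoMatrix

variable {α ι : Type*} [MeasurableSpace α]

noncomputable def infoMatrix (f : α → ι → ℝ) (μ : Measure α) : Matrix ι ι ℝ :=
  Matrix.of fun i j => ∫ x, f x i * f x j ∂μ

theorem infoMatrix_two_point [MeasurableSingletonClass α] (f : α → ι → ℝ) (a b : α)
    {w₁ w₂ : ℝ} (hw₁ : 0 ≤ w₁) (hw₂ : 0 ≤ w₂) :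
    infoMatrix f (ENNReal.ofReal w₁ • Measure.dirac a + ENNReal.ofReal w₂ • Measure.dirac b) =
      w₁ • vecMulVec (f a) (f a) + w₂ • vecMulVec (f b) (f b) := by
  ext i j
  rw [infoMatrix, of_apply, integral_add_measure, integral_smul_measure, integral_smul_measure,
    integral_dirac, integral_dirac, toReal_ofReal hw₁, toReal_ofReal hw₂]
  · simp [vecMulVec]
  all_goals exact (integrable_dirac enorm_lt_top).smul_measure ofReal_ne_top

variable [Fintype ι] {f : α → ι → ℝ} {μ : Measure α}

theorem integrable_sq_dotProduct (hf : ∀ i j, Integrable (fun x => f x i * f x j) μ)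
    (v : ι → ℝ) : Integrable (fun x => (v ⬝ᵥ f x) ^ 2) μ := by
  simp_rw [sq_dotProduct_eq_sum_sum]
  exact integrable_finsetSum _ fun i _ => integrable_finsetSum _ fun j _ => (hf i j).const_mul _

theorem dotProduct_infoMatrix_mulVec (hf : ∀ i j, Integrable (fun x => f x i * f x j) μ)
    (v : ι → ℝ) : v ⬝ᵥ infoMatrix f μ *ᵥ v = ∫ x, (v ⬝ᵥ f x) ^ 2 ∂μ := by
  simp_rw [sq_dotProduct_eq_sum_sum]
  rw [integral_finsetSum _ fun i _ => integrable_finsetSum _ fun j _ => (hf i j).const_mul _]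
  simp only [dotProduct, mulVec, infoMatrix, of_apply, Finset.mul_sum]
  refine Finset.sum_congr rfl fun i _ => ?_
  rw [integral_finsetSum _ fun j _ => (hf i j).const_mul _]
  refine Finset.sum_congr rfl fun j _ => ?_
  rw [integral_const_mul]
  ring

theorem posSemidef_infoMatrix (hf : ∀ i j, Integrable (fun x => f x i * f x j) μ) :
    (infoMatrix f μ).PosSemidef := by
  refine .of_dotProduct_mulVec_nonneg ?_ fun v => ?_
  · ext i j
    simp only [conjTranspose_apply, star_trivial, infoMatrix, of_apply, mul_comm]
  · rw [star_trivial, dotProduct_infoMatrix_mulVec hf]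
    exact integral_nonneg fun x => sq_nonneg _

theorem dotProduct_infoMatrix_mulVec_le_one [IsProbabilityMeasure μ]
    (hf : ∀ i j, Integrable (fun x => f x i * f x j) μ) {v : ι → ℝ}
    (hv : ∀ᵐ x ∂μ, (v ⬝ᵥ f x) ^ 2 ≤ 1) : v ⬝ᵥ infoMatrix f μ *ᵥ v ≤ 1 := by
  rw [dotProduct_infoMatrix_mulVec hf]
  simpa using integral_mono_ae (integrable_sq_dotProduct hf v) (integrable_const (1 : ℝ)) hv

end InfoMatrix

theorem sq_sq_sub_two_mul_le_one {u : ℝ} (hu₀ : 0 ≤ u) (hu : u ≤ 1 + √2) :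
    (u ^ 2 - 2 * u) ^ 2 ≤ 1 := by
  have hq : √2 ^ 2 = 2 := Real.sq_sqrt zero_le_two
  have hq1 : 1 ≤ √2 := Real.one_le_sqrt.2 one_le_two
  have h : (u - 1) ^ 2 ≤ 2 := by
    nlinarith [mul_nonneg (sub_nonneg.2 hu) (by linarith : 0 ≤ u - 1 + √2)]
  nlinarith [sq_nonneg (u - 1)]

section MichaelisMenten

variable {θ1 θ2 : ℝ}

theorem mmInfo_eq_infoMatrix (θ1 θ2 : ℝ) : mmInfo θ1 θ2 = infoMatrix (mmGrad θ1 θ2) := rfl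

theorem mmGrad_eq (hθ2 : θ2 ≠ 0) {x : ℝ} (hx : θ2 + x ≠ 0) :
    mmGrad θ1 θ2 x = ![x / (θ2 + x), -(θ1 / θ2) * (x / (θ2 + x) * (1 - x / (θ2 + x)))] := by
  rw [mmGrad]
  congr 2
  field_simp
  ring

theorem integrable_mmGrad_mul (hθ2 : 0 < θ2) {xmax : ℝ} {ξ : Measure ℝ} [IsFiniteMeasure ξ]
    (hξ : ξ (Set.Icc 0 xmax)ᶜ = 0) (i j : Fin 2) :
    Integrable (fun x => mmGrad θ1 θ2 x i * mmGrad θ1 θ2 x j) ξ := by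
  have hcont : ∀ k, ContinuousOn (fun x => mmGrad θ1 θ2 x k) (Set.Icc 0 xmax) := by
    have hpos : ∀ x ∈ Set.Icc 0 xmax, θ2 + x ≠ 0 := fun x hx => by linarith [hx.1]
    intro k
    fin_cases k
    · exact continuousOn_id.div (by fun_prop) hpos
    · exact (continuousOn_const.mul continuousOn_id).div (by fun_prop)
        fun x hx => pow_ne_zero 2 (hpos x hx)
  have h := ((hcont i).mul (hcont j)).integrableOn_compact (μ := ξ) isCompact_Icc
  rwa [IntegrableOn, Measure.restrict_eq_self_of_ae_mem (s := Set.Icc 0 xmax) (mem_ae_iff.2 hξ)]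
    at h

noncomputable def mmCertificate (θ1 θ2 t : ℝ) : Fin 2 → ℝ :=
  ![(1 - 2 * t) / t ^ 2, θ2 / (θ1 * t ^ 2)]

theorem mmCertificate_dotProduct_vecCons_zero_one (θ1 θ2 t : ℝ) :
    mmCertificate θ1 θ2 t ⬝ᵥ ![0, 1] = θ2 / (θ1 * t ^ 2) := by
  simp [mmCertificate, dotProduct]

theorem mmCertificate_dotProduct_mmGrad (hθ1 : θ1 ≠ 0) (hθ2 : θ2 ≠ 0) {t x : ℝ} (ht : t ≠ 0)
    (hx : θ2 + x ≠ 0) :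
    mmCertificate θ1 θ2 t ⬝ᵥ mmGrad θ1 θ2 x = (x / (θ2 + x) / t) ^ 2 - 2 * (x / (θ2 + x) / t) := by
  rw [mmGrad_eq hθ2 hx, mmCertificate]
  simp only [dotProduct, Fin.sum_univ_two, cons_val_zero, cons_val_one]
  field_simp
  ring

theorem sq_mmCertificate_dotProduct_mmGrad_le_one (hθ1 : 0 < θ1) (hθ2 : 0 < θ2) {t x : ℝ}
    (ht : 0 < t) (hx : 0 ≤ x) (hxt : x / (θ2 + x) ≤ (1 + √2) * t) :
    (mmCertificate θ1 θ2 t ⬝ᵥ mmGrad θ1 θ2 x) ^ 2 ≤ 1 := by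
  rw [mmCertificate_dotProduct_mmGrad hθ1.ne' hθ2.ne' ht.ne' (by positivity)]
  exact sq_sq_sub_two_mul_le_one (by positivity)
    (div_le_of_le_mul₀ ht.le (by positivity) (by linarith))

theorem sq_le_dotProduct_mmInfo_inv_mulVec (hθ1 : 0 < θ1) (hθ2 : 0 < θ2) {xmax t : ℝ}
    (ht : 0 < t) (hxmax : xmax / (θ2 + xmax) ≤ (1 + √2) * t) {ξ : Measure ℝ}
    [IsProbabilityMeasure ξ] (hξ : ξ (Set.Icc 0 xmax)ᶜ = 0) (hdet : IsUnit (mmInfo θ1 θ2 ξ).det) :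
    (θ2 / (θ1 * t ^ 2)) ^ 2 ≤ ![0, 1] ⬝ᵥ (mmInfo θ1 θ2 ξ)⁻¹ *ᵥ ![0, 1] := by
  rw [mmInfo_eq_infoMatrix] at hdet ⊢
  have hf := integrable_mmGrad_mul (θ1 := θ1) hθ2 hξ
  have hM := posSemidef_infoMatrix hf
  set d := mmCertificate θ1 θ2 t
  have hdd : d ⬝ᵥ infoMatrix (mmGrad θ1 θ2) ξ *ᵥ d ≤ 1 := by
    refine dotProduct_infoMatrix_mulVec_le_one hf ?_
    filter_upwards [mem_ae_iff.2 hξ] with x ⟨hx₀, hx⟩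
    refine sq_mmCertificate_dotProduct_mmGrad_le_one hθ1 hθ2 ht hx₀ (le_trans ?_ hxmax)
    rw [div_le_div_iff₀ (by linarith) (by linarith)]
    nlinarith
  calc (θ2 / (θ1 * t ^ 2)) ^ 2 = (d ⬝ᵥ ![0, 1]) ^ 2 := by
        rw [mmCertificate_dotProduct_vecCons_zero_one]
    _ ≤ (d ⬝ᵥ infoMatrix (mmGrad θ1 θ2) ξ *ᵥ d) *
          (![0, 1] ⬝ᵥ (infoMatrix (mmGrad θ1 θ2) ξ)⁻¹ *ᵥ ![0, 1]) :=
      hM.sq_dotProduct_le hdet _ _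
    _ ≤ ![0, 1] ⬝ᵥ (infoMatrix (mmGrad θ1 θ2) ξ)⁻¹ *ᵥ ![0, 1] :=
      mul_le_of_le_one_left (hM.inv.dotProduct_mulVec_nonneg _) hdd

theorem isUnit_det_and_dotProduct_inv_mmInfo_two_point (hθ1 : 0 < θ1) (hθ2 : 0 < θ2)
    {a b t : ℝ} (ht : 0 < t) (ha : a / (θ2 + a) = t) (hb : b / (θ2 + b) = (1 + √2) * t) :
    IsUnit (mmInfo θ1 θ2 (ENNReal.ofReal (1 / √2) • Measure.dirac a +
        ENNReal.ofReal (1 - 1 / √2) • Measure.dirac b)).det ∧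
      ![0, 1] ⬝ᵥ (mmInfo θ1 θ2 (ENNReal.ofReal (1 / √2) • Measure.dirac a +
        ENNReal.ofReal (1 - 1 / √2) • Measure.dirac b))⁻¹ *ᵥ ![0, 1] =
        (θ2 / (θ1 * t ^ 2)) ^ 2 := by
  have hq : √2 ^ 2 = 2 := Real.sq_sqrt zero_le_two
  have hq1 : 1 < √2 := Real.one_lt_sqrt_two
  have hw : 1 / √2 = √2 / 2 := by field_simp; exact hq.symm
  have ha₀ : θ2 + a ≠ 0 := fun h => by simp only [h, _root_.div_zero] at ha; linarith
  have hb₀ : θ2 + b ≠ 0 := fun h => by simp only [h, _root_.div_zero] at hb; nlinarith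
  rw [hw, mmInfo_eq_infoMatrix,
    infoMatrix_two_point (mmGrad θ1 θ2) a b (by positivity) (by nlinarith)]
  set d := mmCertificate θ1 θ2 t
  have hda : mmGrad θ1 θ2 a ⬝ᵥ d = -1 := by
    rw [dotProduct_comm, mmCertificate_dotProduct_mmGrad hθ1.ne' hθ2.ne' ht.ne' ha₀, ha,
      div_self ht.ne']
    norm_num
  have hdb : mmGrad θ1 θ2 b ⬝ᵥ d = 1 := by
    rw [dotProduct_comm, mmCertificate_dotProduct_mmGrad hθ1.ne' hθ2.ne' ht.ne' hb₀, hb,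
      mul_div_cancel_right₀ _ ht.ne']
    linear_combination hq
  have hfa : mmGrad θ1 θ2 a = ![t, -(θ1 / θ2) * (t * (1 - t))] := by
    rw [mmGrad_eq hθ2.ne' ha₀, ha]
  have hfb : mmGrad θ1 θ2 b =
      ![(1 + √2) * t, -(θ1 / θ2) * ((1 + √2) * t * (1 - (1 + √2) * t))] := by
    rw [mmGrad_eq hθ2.ne' hb₀, hb]
  set M := (√2 / 2) • vecMulVec (mmGrad θ1 θ2 a) (mmGrad θ1 θ2 a) +
      (1 - √2 / 2) • vecMulVec (mmGrad θ1 θ2 b) (mmGrad θ1 θ2 b) with hM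
  have hdet : IsUnit M.det := by
    rw [hM, det_smul_vecMulVec_add_smul_vecMulVec, hfa, hfb, isUnit_iff_ne_zero]
    simp only [cons_val_zero, cons_val_one]
    refine mul_ne_zero (mul_ne_zero (by positivity) (by nlinarith)) (pow_ne_zero 2 fun h => ?_)
    have h' : θ1 / θ2 * √2 * (1 + √2) * t ^ 3 = 0 := by linear_combination h
    exact (by positivity : (0 : ℝ) < _).ne' h'
  have hMd : M *ᵥ (θ2 / (θ1 * t ^ 2)) • d = ![0, 1] := by
    rw [hM, mulVec_smul, smul_vecMulVec_add_smul_vecMulVec_mulVec, hda, hdb, hfa, hfb]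
    ext i
    fin_cases i
    · simp only [Fin.zero_eta, Pi.smul_apply, Pi.add_apply, cons_val_zero, smul_eq_mul]
      linear_combination (θ2 / (θ1 * t ^ 2) * (-t / 2)) * hq
    · simp only [Fin.mk_one, Pi.smul_apply, Pi.add_apply, cons_val_one, cons_val_fin_one,
        smul_eq_mul]
      field_simp
      linear_combination (1 - t * √2) * hq
  refine ⟨hdet, ?_⟩
  rw [dotProduct_inv_mulVec_eq_of_mulVec_eq hdet hMd, dotProduct_smul, dotProduct_comm,
    mmCertificate_dotProduct_vecCons_zero_one, smul_eq_mul, ← sq]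

end MichaelisMenten

theorem xc_div_add_xc_eq {θ2 xmax b xc : ℝ} (hθ2 : 0 < θ2) (hx : 0 ≤ xmax) (hb : b = xmax / θ2)
    (hxc : xc = θ2 * b * (√2 - 1) / (1 + b * √2 * (√2 - 1))) :
    xc / (θ2 + xc) = (√2 - 1) * (xmax / (θ2 + xmax)) := by
  have hq : √2 ^ 2 = 2 := Real.sq_sqrt zero_le_two
  have hq1 : 1 < √2 := Real.one_lt_sqrt_two
  have hb₀ : 0 ≤ b := hb ▸ by positivity
  have hD : 0 < 1 + b * √2 * (√2 - 1) := by
    have : 0 ≤ b * √2 * (√2 - 1) := mul_nonneg (by positivity) (by linarith)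
    linarith
  have hxmax : xmax = θ2 * b := by rw [hb]; field_simp
  subst hxc hxmax
  field_simp
  rw [show 1 + b * √2 * (√2 - 1) + b * (√2 - 1) = 1 + b by linear_combination b * hq]
  field_simp

/-- The design placing mass `1/√2` at `x_c = θ₂ b (√2−1)/(1 + b√2(√2−1))` (with
`b = xmax/θ₂`) and mass `1 − 1/√2` at `xmax` is the locally c-optimal design for the
Michaelis–Menten constant `θ₂`: its information matrix is invertible and it minimizes
`cᵀ M(ξ)⁻¹ c`, `c = (0,1)ᵀ`, over all designs with invertible information matrix. -/
theorem stmt15 (θ1 θ2 xmax : ℝ) (hθ1 : 0 < θ1) (hθ2 : 0 < θ2) (hx : 0 < xmax)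
    (b : ℝ) (hb : b = xmax / θ2)
    (xc : ℝ) (hxc : xc = θ2 * b * (Real.sqrt 2 - 1) / (1 + b * Real.sqrt 2 * (Real.sqrt 2 - 1)))
    (ξc : Measure ℝ)
    (hξc : ξc = ENNReal.ofReal (1 / Real.sqrt 2) • Measure.dirac xc +
      ENNReal.ofReal (1 - 1 / Real.sqrt 2) • Measure.dirac xmax) :
    IsUnit (mmInfo θ1 θ2 ξc).det ∧
      ∀ ξ : Measure ℝ, IsProbabilityMeasure ξ → ξ (Set.Icc 0 xmax)ᶜ = 0 →
        IsUnit (mmInfo θ1 θ2 ξ).det →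
          ![0, 1] ⬝ᵥ (mmInfo θ1 θ2 ξc)⁻¹ *ᵥ ![0, 1] ≤
            ![0, 1] ⬝ᵥ (mmInfo θ1 θ2 ξ)⁻¹ *ᵥ ![0, 1] := by
  have hq : (1 + √2) * (√2 - 1) = 1 := by linear_combination Real.sq_sqrt zero_le_two
  set t := (√2 - 1) * (xmax / (θ2 + xmax))
  have ht : 0 < t := mul_pos (by linarith [Real.one_lt_sqrt_two]) (by positivity)
  have hxmax : xmax / (θ2 + xmax) = (1 + √2) * t := by rw [← mul_assoc, hq, one_mul]
  obtain ⟨hunit, hval⟩ := isUnit_det_and_dotProduct_inv_mmInfo_two_point hθ1 hθ2 ht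
    (xc_div_add_xc_eq hθ2 hx.le hb hxc) hxmax
  subst hξc
  refine ⟨hunit, fun ξ _ hξ hdet => ?_⟩
  rw [hval]
  exact sq_le_dotProduct_mmInfo_inv_mulVec hθ1 hθ2 ht hxmax.le hξ hdet
end
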